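/- arXiv:1711.06647 — 2 statements merged into one kernel-verified Lean document; each statement's English description precedes it below -/
import Mathlib

section
/- Rellich identity: For B ∈ C¹(Ω, ℝⁿ) and f ∈ C²(Ω), with Δ_g f = ∂_i(g^{ij} ∂_j f), ∇_g f = g⁻¹ ∇f, |∇_g f|² = g^{ij} ∂_i f ∂_j f, and ⟨B, ∇_g f⟩ = g_{ij} B_i (∇_g f)_j = B_i ∂_i f the inner product induced by g, we have 2⟨B, ∇_g f⟩ Δ_g f = div[2⟨B, ∇_g f⟩ ∇_g f − B |∇_g f|²] + div(B)|∇_g f|² − 2 ∂_i B^k g^{ij} ∂_j f ∂_k f + B^k ∂_k g^{ij} ∂_i f ∂_j f. -/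
open MeasureTheory Metric Finset Real Bornology

noncomputable section

/-- Partial derivative `∂_i f (x)`. -/
def pd {n : ℕ} (i : Fin n) (f : (Fin n → ℝ) → ℝ) (x : Fin n → ℝ) : ℝ :=
  fderiv ℝ f x (Pi.single i 1)

/-- Second partial derivative `∂²_{ij} f (x)`. -/
def pd2 {n : ℕ} (i j : Fin n) (f : (Fin n → ℝ) → ℝ) (x : Fin n → ℝ) : ℝ :=
  pd i (fun y => pd j f y) x

/-- `ξ^{(g)} = g(x)⁻¹ ξ`. -/
def raise {n : ℕ} (g : (Fin n → ℝ) → Matrix (Fin n) (Fin n) ℝ)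
    (x : Fin n → ℝ) (ξ : Fin n → ℝ) : Fin n → ℝ :=
  fun i => ∑ j, (g x)⁻¹ i j * ξ j

/-- `∇_g f = g⁻¹ ∇f`. -/
def gradg {n : ℕ} (g : (Fin n → ℝ) → Matrix (Fin n) (Fin n) ℝ)
    (f : (Fin n → ℝ) → ℝ) (x : Fin n → ℝ) : Fin n → ℝ :=
  fun i => ∑ j, (g x)⁻¹ i j * pd j f x

/-- `⟨ξ, η⟩ = g_{ij} ξ_i η_j`. -/
def innerg {n : ℕ} (g : (Fin n → ℝ) → Matrix (Fin n) (Fin n) ℝ)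
    (x : Fin n → ℝ) (ξ η : Fin n → ℝ) : ℝ :=
  ∑ i, ∑ j, g x i j * ξ i * η j

/-- `Δ_g f = ∂_i (g^{ij} ∂_j f)`. -/
def lapg {n : ℕ} (g : (Fin n → ℝ) → Matrix (Fin n) (Fin n) ℝ)
    (f : (Fin n → ℝ) → ℝ) (x : Fin n → ℝ) : ℝ :=
  ∑ i, pd i (fun y => ∑ j, (g y)⁻¹ i j * pd j f y) x

section Aux
variable {n : ℕ}

lemma pd_congr {F G : (Fin n → ℝ) → ℝ} {x : Fin n → ℝ} (h : F =ᶠ[nhds x] G) (i : Fin n) :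
    pd i F x = pd i G x := by
  unfold pd; rw [Filter.EventuallyEq.fderiv_eq h]

lemma pd_sum {ι : Type*} (s : Finset ι) (F : ι → (Fin n → ℝ) → ℝ) {x : Fin n → ℝ}
    (h : ∀ j ∈ s, DifferentiableAt ℝ (F j) x) (i : Fin n) :
    pd i (fun y => ∑ j ∈ s, F j y) x = ∑ j ∈ s, pd i (F j) x := by
  unfold pd
  rw [fderiv_fun_sum h]
  simp

lemma pd_mul {F G : (Fin n → ℝ) → ℝ} {x : Fin n → ℝ} (hF : DifferentiableAt ℝ F x)
    (hG : DifferentiableAt ℝ G x) (i : Fin n) :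
    pd i (fun y => F y * G y) x = pd i F x * G x + F x * pd i G x := by
  unfold pd
  rw [fderiv_fun_mul hF hG]
  simp
  ring

lemma pd_const_mul {F : (Fin n → ℝ) → ℝ} {x : Fin n → ℝ} (hF : DifferentiableAt ℝ F x)
    (c : ℝ) (i : Fin n) : pd i (fun y => c * F y) x = c * pd i F x := by
  unfold pd
  rw [fderiv_const_mul hF]
  simp

lemma pd_sub {F G : (Fin n → ℝ) → ℝ} {x : Fin n → ℝ} (hF : DifferentiableAt ℝ F x)
    (hG : DifferentiableAt ℝ G x) (i : Fin n) :
    pd i (fun y => F y - G y) x = pd i F x - pd i G x := by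
  unfold pd
  rw [fderiv_fun_sub hF hG]
  simp

lemma pd2_symm {f : (Fin n → ℝ) → ℝ} {x : Fin n → ℝ} (hf : ContDiffAt ℝ 2 f x) (i j : Fin n) :
    pd2 i j f x = pd2 j i f x := by
  have hd : DifferentiableAt ℝ (fderiv ℝ f) x :=
    (hf.fderiv_right (m := 1) le_rfl).differentiableAt one_ne_zero
  have key : ∀ a b : Fin n, pd2 a b f x
      = fderiv ℝ (fderiv ℝ f) x (Pi.single a 1) (Pi.single b 1) := by
    intro a b
    unfold pd2 pd
    rw [fderiv_clm_apply hd (differentiableAt_const _)]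
    simp
  rw [key, key]
  exact hf.isSymmSndFDerivAt (by simp) _ _

lemma contDiffAt_pd {f : (Fin n → ℝ) → ℝ} {x : Fin n → ℝ} (hf : ContDiffAt ℝ 2 f x) (j : Fin n) :
    ContDiffAt ℝ 1 (fun y => pd j f y) x := by
  have h1 : ContDiffAt ℝ 1 (fderiv ℝ f) x := hf.fderiv_right (by norm_num)
  exact h1.clm_apply contDiffAt_const

lemma contDiffAt_inv_entry {g : (Fin n → ℝ) → Matrix (Fin n) (Fin n) ℝ} {x : Fin n → ℝ}
    (h : ∀ i j, ContDiffAt ℝ 1 (fun y => g y i j) x) (hdet : (g x).det ≠ 0) (a b : Fin n) :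
    ContDiffAt ℝ 1 (fun y => (g y)⁻¹ a b) x := by
  have hdetC : ContDiffAt ℝ 1 (fun y => (g y).det) x := by
    simp only [Matrix.det_apply']
    exact ContDiffAt.sum fun σ _ => contDiffAt_const.mul (contDiffAt_prod fun i _ => h (σ i) i)
  have hadj : ContDiffAt ℝ 1 (fun y => (g y).adjugate a b) x := by
    simp only [Matrix.adjugate_apply, Matrix.det_apply']
    refine ContDiffAt.sum fun σ _ => contDiffAt_const.mul (contDiffAt_prod fun i _ => ?_)
    rcases eq_or_ne (σ i) b with hib | hib
    · simp only [Matrix.updateRow_apply, if_pos hib]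
      exact contDiffAt_const
    · simp only [Matrix.updateRow_apply, if_neg hib]
      exact h (σ i) i
  have heq : (fun y => (g y)⁻¹ a b) = fun y => ((g y).det)⁻¹ * (g y).adjugate a b := by
    funext y
    rw [Matrix.inv_def, Matrix.smul_apply, Ring.inverse_eq_inv', smul_eq_mul]
  rw [heq]
  exact (hdetC.inv hdet).mul hadj

lemma key_algebra {n : ℕ} (p Bx pdV : Fin n → ℝ) (DB G H : Fin n → Fin n → ℝ)
    (DG : Fin n → Fin n → Fin n → ℝ) (U Q : ℝ)
    (Gsym : ∀ a b, G a b = G b a) (Hsym : ∀ a b, H a b = H b a) :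
    2 * U * (∑ i, pdV i)
      = (∑ i, (2 * ((∑ k, (DB i k * p k + Bx k * H i k)) * (∑ j, G i j * p j) + U * pdV i)
          - (DB i i * Q + Bx i * (∑ a, ∑ b, (DG i a b * p a * p b
              + G a b * H i a * p b + G a b * p a * H i b)))))
        + (∑ i, DB i i) * Q
        - 2 * (∑ i, ∑ k, ∑ j, DB i k * G i j * p j * p k)
        + ∑ k, ∑ i, ∑ j, Bx k * DG k i j * p i * p j := by
  have e1 : ∀ i, (∑ k, (DB i k * p k + Bx k * H i k)) * (∑ j, G i j * p j)
      = (∑ k, ∑ j, DB i k * G i j * p j * p k) + (∑ k, ∑ j, Bx k * H i k * G i j * p j) := by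
    intro i
    rw [Finset.sum_mul, ← Finset.sum_add_distrib]
    refine Finset.sum_congr rfl fun k _ => ?_
    rw [add_mul, Finset.mul_sum, Finset.mul_sum]
    congr 1 <;> exact Finset.sum_congr rfl fun j _ => by ring
  have e3 : ∀ i, (∑ a, ∑ b, G a b * p a * H i b) = ∑ a, ∑ b, G a b * H i a * p b := by
    intro i
    rw [Finset.sum_comm]
    exact Finset.sum_congr rfl fun a _ => Finset.sum_congr rfl fun b _ => by
      rw [Gsym]; ring
  have e2 : ∀ i, (∑ a, ∑ b, (DG i a b * p a * p b + G a b * H i a * p b + G a b * p a * H i b))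
      = (∑ a, ∑ b, DG i a b * p a * p b) + 2 * (∑ a, ∑ b, G a b * H i a * p b) := by
    intro i
    simp only [Finset.sum_add_distrib]
    rw [e3 i]; ring
  have e4 : (∑ i, Bx i * (∑ a, ∑ b, DG i a b * p a * p b))
      = ∑ k, ∑ i, ∑ j, Bx k * DG k i j * p i * p j := by
    refine Finset.sum_congr rfl fun k _ => ?_
    rw [Finset.mul_sum]
    refine Finset.sum_congr rfl fun a _ => ?_
    rw [Finset.mul_sum]
    exact Finset.sum_congr rfl fun b _ => by ring
  have e5 : (∑ i, ∑ k, ∑ j, Bx k * H i k * G i j * p j)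
      = ∑ i, Bx i * (∑ a, ∑ b, G a b * H i a * p b) := by
    rw [Finset.sum_comm]
    refine Finset.sum_congr rfl fun k _ => ?_
    rw [Finset.mul_sum]
    refine Finset.sum_congr rfl fun i _ => ?_
    rw [Finset.mul_sum]
    refine Finset.sum_congr rfl fun j _ => ?_
    rw [Hsym i k]; ring
  have e2b : ∀ i, Bx i * (∑ a, ∑ b, (DG i a b * p a * p b
        + G a b * H i a * p b + G a b * p a * H i b))
      = Bx i * (∑ a, ∑ b, DG i a b * p a * p b)
        + 2 * (Bx i * (∑ a, ∑ b, G a b * H i a * p b)) := by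
    intro i; rw [e2]; ring
  simp only [e1, e2b]
  simp only [mul_add, Finset.sum_add_distrib, Finset.sum_sub_distrib]
  simp only [← Finset.mul_sum]
  rw [e4, e5, ← Finset.sum_mul]
  ring

end Aux

/-- Rellich identity. -/
theorem stmt_1 {n : ℕ} (Ω : Set (Fin n → ℝ)) (hΩ : IsOpen Ω)
    (g : (Fin n → ℝ) → Matrix (Fin n) (Fin n) ℝ)
    (hg : ∀ y ∈ Ω, (g y).PosDef)
    (hgC1 : ∀ i j, ContDiffOn ℝ 1 (fun y => g y i j) Ω)
    (B : (Fin n → ℝ) → Fin n → ℝ)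
    (hB : ∀ k, ContDiffOn ℝ 1 (fun y => B y k) Ω)
    (f : (Fin n → ℝ) → ℝ) (hf : ContDiffOn ℝ 2 f Ω)
    (x : Fin n → ℝ) (hx : x ∈ Ω) :
    2 * innerg g x (B x) (gradg g f x) * lapg g f x
      = (∑ i, pd i (fun y =>
            2 * innerg g y (B y) (gradg g f y) * gradg g f y i
              - B y i * (∑ a, ∑ b, (g y)⁻¹ a b * pd a f y * pd b f y)) x)
        + (∑ i, pd i (fun y => B y i) x)
            * (∑ a, ∑ b, (g x)⁻¹ a b * pd a f x * pd b f x)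
        - 2 * ∑ i, ∑ k, ∑ j, pd i (fun y => B y k) x * (g x)⁻¹ i j * pd j f x * pd k f x
        + ∑ k, ∑ i, ∑ j, B x k * pd k (fun y => (g y)⁻¹ i j) x * pd i f x * pd j f x := by
  have hxnb : Ω ∈ nhds x := hΩ.mem_nhds hx
  have hf2 : ContDiffAt ℝ 2 f x := hf.contDiffAt hxnb
  have hdP : ∀ j, DifferentiableAt ℝ (fun y => pd j f y) x :=
    fun j => (contDiffAt_pd hf2 j).differentiableAt one_ne_zero
  have hdB : ∀ k, DifferentiableAt ℝ (fun y => B y k) x :=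
    fun k => ((hB k).contDiffAt hxnb).differentiableAt one_ne_zero
  have hdG : ∀ a b, DifferentiableAt ℝ (fun y => (g y)⁻¹ a b) x :=
    fun a b => (contDiffAt_inv_entry (fun i j => (hgC1 i j).contDiffAt hxnb)
      (hg x hx).det_pos.ne' a b).differentiableAt one_ne_zero
  -- the inner product ⟨B, ∇_g f⟩ equals ∑ B_k ∂_k f on Ω
  have hinner : ∀ y ∈ Ω, innerg g y (B y) (gradg g f y) = ∑ k, B y k * pd k f y := by
    intro y hy
    have hdet : IsUnit (g y).det := (hg y hy).det_pos.ne'.isUnit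
    have hmul : ∀ i c, (∑ j, g y i j * (g y)⁻¹ j c) = if i = c then 1 else 0 := by
      intro i c
      have h1 : g y * (g y)⁻¹ = 1 := Matrix.mul_nonsing_inv _ hdet
      have h2 := congrFun (congrFun h1 i) c
      rwa [Matrix.mul_apply, Matrix.one_apply] at h2
    unfold innerg gradg
    refine Finset.sum_congr rfl fun i _ => ?_
    calc (∑ j, g y i j * B y i * (∑ c, (g y)⁻¹ j c * pd c f y))
        = ∑ j, ∑ c, (g y i j * (g y)⁻¹ j c) * (B y i * pd c f y) := by
          refine Finset.sum_congr rfl fun j _ => ?_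
          rw [Finset.mul_sum]
          exact Finset.sum_congr rfl fun c _ => by ring
      _ = ∑ c, ∑ j, (g y i j * (g y)⁻¹ j c) * (B y i * pd c f y) := Finset.sum_comm
      _ = ∑ c, (∑ j, g y i j * (g y)⁻¹ j c) * (B y i * pd c f y) := by
          refine Finset.sum_congr rfl fun c _ => ?_
          rw [Finset.sum_mul]
      _ = ∑ c, (if i = c then (1:ℝ) else 0) * (B y i * pd c f y) := by
          refine Finset.sum_congr rfl fun c _ => ?_
          rw [hmul]
      _ = B y i * pd i f y := by simp
  -- expansion of each divergence term
  have expand : ∀ i, pd i (fun y =>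
        2 * innerg g y (B y) (gradg g f y) * gradg g f y i
          - B y i * (∑ a, ∑ b, (g y)⁻¹ a b * pd a f y * pd b f y)) x
      = 2 * ((∑ k, (pd i (fun y => B y k) x * pd k f x + B x k * pd2 i k f x))
              * (∑ j, (g x)⁻¹ i j * pd j f x)
            + (∑ k, B x k * pd k f x) * pd i (fun y => ∑ j, (g y)⁻¹ i j * pd j f y) x)
        - (pd i (fun y => B y i) x * (∑ a, ∑ b, (g x)⁻¹ a b * pd a f x * pd b f x)
          + B x i * (∑ a, ∑ b, (pd i (fun y => (g y)⁻¹ a b) x * pd a f x * pd b f x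
              + (g x)⁻¹ a b * pd2 i a f x * pd b f x
              + (g x)⁻¹ a b * pd a f x * pd2 i b f x))) := by
    intro i
    have hdU : DifferentiableAt ℝ (fun y => ∑ k, B y k * pd k f y) x :=
      DifferentiableAt.fun_sum fun k _ => (hdB k).mul (hdP k)
    have hdV : DifferentiableAt ℝ (fun y => ∑ j, (g y)⁻¹ i j * pd j f y) x :=
      DifferentiableAt.fun_sum fun j _ => (hdG i j).mul (hdP j)
    have hdQ : DifferentiableAt ℝ (fun y => ∑ a, ∑ b, (g y)⁻¹ a b * pd a f y * pd b f y) x :=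
      DifferentiableAt.fun_sum fun a _ => DifferentiableAt.fun_sum fun b _ =>
        ((hdG a b).mul (hdP a)).mul (hdP b)
    have hev : (fun y => 2 * innerg g y (B y) (gradg g f y) * gradg g f y i
          - B y i * (∑ a, ∑ b, (g y)⁻¹ a b * pd a f y * pd b f y))
        =ᶠ[nhds x] (fun y => 2 * ((∑ k, B y k * pd k f y) * (∑ j, (g y)⁻¹ i j * pd j f y))
          - B y i * (∑ a, ∑ b, (g y)⁻¹ a b * pd a f y * pd b f y)) := by
      filter_upwards [hxnb] with y hy
      simp only [gradg]
      rw [hinner y hy, mul_assoc]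
    rw [pd_congr hev i]
    rw [pd_sub ((hdU.fun_mul hdV).const_mul 2) ((hdB i).fun_mul hdQ) i,
       pd_const_mul (hdU.fun_mul hdV) 2 i, pd_mul hdU hdV i, pd_mul (hdB i) hdQ i]
    rw [pd_sum Finset.univ (fun k => fun y => B y k * pd k f y)
        (fun k _ => (hdB k).mul (hdP k)) i]
    rw [pd_sum Finset.univ (fun a => fun y => ∑ b, (g y)⁻¹ a b * pd a f y * pd b f y)
        (fun a _ => DifferentiableAt.fun_sum fun b _ => ((hdG a b).mul (hdP a)).mul (hdP b)) i]
    have hU : (∑ k, pd i (fun y => B y k * pd k f y) x)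
        = ∑ k, (pd i (fun y => B y k) x * pd k f x + B x k * pd2 i k f x) := by
      refine Finset.sum_congr rfl fun k _ => ?_
      rw [pd_mul (hdB k) (hdP k) i]
      rfl
    have hQ : (∑ a, pd i (fun y => ∑ b, (g y)⁻¹ a b * pd a f y * pd b f y) x)
        = ∑ a, ∑ b, (pd i (fun y => (g y)⁻¹ a b) x * pd a f x * pd b f x
            + (g x)⁻¹ a b * pd2 i a f x * pd b f x
            + (g x)⁻¹ a b * pd a f x * pd2 i b f x) := by
      refine Finset.sum_congr rfl fun a _ => ?_
      rw [pd_sum Finset.univ (fun b => fun y => (g y)⁻¹ a b * pd a f y * pd b f y)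
          (fun b _ => ((hdG a b).mul (hdP a)).mul (hdP b)) i]
      refine Finset.sum_congr rfl fun b _ => ?_
      rw [pd_mul ((hdG a b).fun_mul (hdP a)) (hdP b) i, pd_mul (hdG a b) (hdP a) i]
      show (pd i (fun y => (g y)⁻¹ a b) x * pd a f x + (g x)⁻¹ a b * pd2 i a f x) * pd b f x
          + (g x)⁻¹ a b * pd a f x * pd2 i b f x = _
      ring
    rw [hU, hQ]
  rw [hinner x hx]
  rw [Finset.sum_congr rfl (fun i _ => expand i)]
  have Gsym : ∀ a b, (g x)⁻¹ a b = (g x)⁻¹ b a := by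
    intro a b
    have h := ((hg x hx).1.inv).apply b a
    simpa using h
  exact key_algebra (fun j => pd j f x) (fun k => B x k)
    (fun i => pd i (fun y => ∑ j, (g y)⁻¹ i j * pd j f y) x)
    (fun i k => pd i (fun y => B y k) x) (fun a b => (g x)⁻¹ a b)
    (fun i k => pd2 i k f x) (fun i a b => pd i (fun y => (g y)⁻¹ a b) x)
    (∑ k, B x k * pd k f x) (∑ a, ∑ b, (g x)⁻¹ a b * pd a f x * pd b f x)
    Gsym (pd2_symm hf2)
end
end

section
/- Construction of pseudoconvex weights: assume g satisfies uniform ellipticity (constant λ) and Lipschitz continuity (constant Λ). Let m₀, M₀ > 0 and ψ ∈ C²(Ω̄) satisfy min_{Ω̄}|∇_g ψ| ≥ m₀ and ‖ψ‖_{C²(Ω̄)} ≤ M₀. Then there exists C > 0, depending only on λ, Λ, M₀, such that for every μ ≥ C/m₀ the function φ = e^{μψ} satisfies the strong pseudoconvexity assumption: there exists c₀ > 0 (one may take c₀ = (1/2)m₀²μ²e^{μ min ψ}) such that P(x,ζ)=0 and ζ = ξ + iτ∇φ(x) ≠ 0 imply Q(x,ξ,τ) ≥ c₀|ζ|². -/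
open MeasureTheory Metric Finset Real Bornology

noncomputable section

/-- The quadratic form `q(x,ϑ)` of \eqref{Q1}. -/
def qform {n : ℕ} (g : (Fin n → ℝ) → Matrix (Fin n) (Fin n) ℝ)
    (φ : (Fin n → ℝ) → ℝ) (x : Fin n → ℝ) (ϑ : Fin n → ℝ) : ℝ :=
  4 * ∑ j, ∑ k, pd2 j k φ x * ϑ j * ϑ k
  - 4 * ∑ s, ∑ k, ∑ h, pd s (fun y => g y k h) x * gradg g φ x k * ϑ h * ϑ s
  + 2 * ∑ s, ∑ t, ∑ w, pd s (fun y => g y t w) x * gradg g φ x s * ϑ t * ϑ w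

/-- The form `Q(x,ξ,τ)` of \eqref{nuovadefQ}. -/
def Qform {n : ℕ} (g : (Fin n → ℝ) → Matrix (Fin n) (Fin n) ℝ)
    (φ : (Fin n → ℝ) → ℝ) (x : Fin n → ℝ) (ξ : Fin n → ℝ) (τ : ℝ) : ℝ :=
  4 * ((∑ j, ∑ k, pd2 j k φ x * raise g x ξ j * raise g x ξ k)
      + τ^2 * ∑ j, ∑ k, pd2 j k φ x * gradg g φ x j * gradg g φ x k)
  - 4 * ∑ s, ∑ k, ∑ h, pd s (fun y => g y k h) x * gradg g φ x k * raise g x ξ h * raise g x ξ s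
  + 2 * ∑ s, ∑ t, ∑ w, pd s (fun y => g y t w) x * raise g x ξ t * raise g x ξ w * gradg g φ x s
  - 2 * τ^2 * ∑ s, ∑ k, ∑ h, pd s (fun y => g y k h) x * gradg g φ x k * gradg g φ x h * gradg g φ x s

/-- `P(x,ζ) = g^{ij}(x) ζ_i ζ_j` for complex `ζ`. -/
def Pc {n : ℕ} (g : (Fin n → ℝ) → Matrix (Fin n) (Fin n) ℝ)
    (x : Fin n → ℝ) (ζ : Fin n → ℂ) : ℂ :=
  ∑ i, ∑ j, ((g x)⁻¹ i j : ℂ) * ζ i * ζ j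

/-!
For `φ = e^{μψ}` one has `∇φ = μφ∇ψ` and `∇²φ = μφ∇²ψ + μ²φ ∇ψ ⊗ ∇ψ`. Write `T = τμφ`,
`u = g⁻¹ξ`, `v = ∇_g ψ` and `r = |∇_g ψ|²_g ≥ m₀²`. The real part of `P(x, ξ + iτ∇φ) = 0`
reads `ξ·u = T² r`, so by ellipticity `|u|² ≲ T² r` and `|ξ|² ≲ T² r`. After dividing by `μφ`,
`Q` consists of the good term `4μT²r²` (from the `μ²φ ∇ψ ⊗ ∇ψ` part of `∇²φ` at `τ∇φ`), a
nonnegative term, and terms bounded by `K T² r` with `K` depending only on `n, λ, Λ, M₀`. Once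
`2μm₀² ≥ K` this gives `Q ≥ 2μ²m₀⁴ φ T²`, while `|ζ|² ≤ K₂ T²` and `φ ≥ e^{-μM₀}`.
-/

open Matrix

section Forms

variable {ι : Type*} [Fintype ι]

lemma sum_sum_mul_mul_eq_dotProduct_mulVec (A : Matrix ι ι ℝ) (p q : ι → ℝ) :
    ∑ i, ∑ j, A i j * p i * q j = p ⬝ᵥ (A *ᵥ q) := by
  simp only [dotProduct, mulVec, Finset.mul_sum]
  exact sum_congr rfl fun _ _ => sum_congr rfl fun _ _ => by ring

lemma sum_sq_eq_dotProduct_self (p : ι → ℝ) : ∑ i, p i ^ 2 = p ⬝ᵥ p := by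
  simp [dotProduct, sq]

lemma sq_norm_le_dotProduct_self (p : ι → ℝ) : ‖p‖ ^ 2 ≤ p ⬝ᵥ p := by
  have hcoord : ∀ i, ‖p i‖ ≤ √(p ⬝ᵥ p) := fun i => by
    rw [Real.norm_eq_abs, ← sum_sq_eq_dotProduct_self]
    exact Real.abs_le_sqrt (single_le_sum (fun j _ => sq_nonneg (p j)) (mem_univ i))
  have hsum : 0 ≤ p ⬝ᵥ p := by
    rw [← sum_sq_eq_dotProduct_self]; positivity
  calc ‖p‖ ^ 2 ≤ √(p ⬝ᵥ p) ^ 2 := by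
        gcongr; exact (pi_norm_le_iff_of_nonneg (Real.sqrt_nonneg _)).2 hcoord
    _ = p ⬝ᵥ p := Real.sq_sqrt hsum

lemma abs_sum_le_card_mul {f : ι → ℝ} {B : ℝ} (h : ∀ i, |f i| ≤ B) :
    |∑ i, f i| ≤ Fintype.card ι * B := by
  calc |∑ i, f i| ≤ ∑ i, |f i| := abs_sum_le_sum_abs _ _
    _ ≤ ∑ _i : ι, B := sum_le_sum fun i _ => h i
    _ = Fintype.card ι * B := by simp

lemma abs_dotProduct_le (p q : ι → ℝ) : |p ⬝ᵥ q| ≤ Fintype.card ι * (‖p‖ * ‖q‖) :=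
  abs_sum_le_card_mul fun i => by
    rw [abs_mul]; exact mul_le_mul (norm_le_pi_norm p i) (norm_le_pi_norm q i)
      (abs_nonneg _) (norm_nonneg _)

lemma abs_dotProduct_mulVec_le {A : Matrix ι ι ℝ} {M : ℝ} (hA : ∀ i j, |A i j| ≤ M)
    (p q : ι → ℝ) : |p ⬝ᵥ (A *ᵥ q)| ≤ Fintype.card ι ^ 2 * M * (‖p‖ * ‖q‖) := by
  have hterm : ∀ i j, |A i j * p i * q j| ≤ M * (‖p‖ * ‖q‖) := fun i j => by
    have hM : 0 ≤ M := (abs_nonneg _).trans (hA i j)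
    rw [abs_mul, abs_mul, ← mul_assoc]
    gcongr
    exacts [hA i j, norm_le_pi_norm p i, norm_le_pi_norm q j]
  calc |p ⬝ᵥ (A *ᵥ q)| ≤ Fintype.card ι * (Fintype.card ι * (M * (‖p‖ * ‖q‖))) := by
        rw [← sum_sum_mul_mul_eq_dotProduct_mulVec]
        exact abs_sum_le_card_mul fun i => abs_sum_le_card_mul fun j => hterm i j
    _ = _ := by ring

def trilinSum (D : ι → ι → ι → ℝ) (p q r : ι → ℝ) : ℝ :=
  ∑ s, ∑ k, ∑ h, D s k h * p k * q h * r s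

lemma trilinSum_smul_left (D : ι → ι → ι → ℝ) (c : ℝ) (p q r : ι → ℝ) :
    trilinSum D (c • p) q r = c * trilinSum D p q r := by
  simp only [trilinSum, Pi.smul_apply, smul_eq_mul, Finset.mul_sum]
  exact sum_congr rfl fun _ _ => sum_congr rfl fun _ _ => sum_congr rfl fun _ _ => by ring

lemma trilinSum_smul_mid (D : ι → ι → ι → ℝ) (c : ℝ) (p q r : ι → ℝ) :
    trilinSum D p (c • q) r = c * trilinSum D p q r := by
  simp only [trilinSum, Pi.smul_apply, smul_eq_mul, Finset.mul_sum]
  exact sum_congr rfl fun _ _ => sum_congr rfl fun _ _ => sum_congr rfl fun _ _ => by ring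

lemma trilinSum_smul_right (D : ι → ι → ι → ℝ) (c : ℝ) (p q r : ι → ℝ) :
    trilinSum D p q (c • r) = c * trilinSum D p q r := by
  simp only [trilinSum, Pi.smul_apply, smul_eq_mul, Finset.mul_sum]
  exact sum_congr rfl fun _ _ => sum_congr rfl fun _ _ => sum_congr rfl fun _ _ => by ring

lemma abs_trilinSum_le {D : ι → ι → ι → ℝ} {L : ℝ} (hD : ∀ s k h, |D s k h| ≤ L)
    (p q r : ι → ℝ) :
    |trilinSum D p q r| ≤ Fintype.card ι ^ 3 * L * (‖p‖ * ‖q‖ * ‖r‖) := by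
  have hterm : ∀ s k h, |D s k h * p k * q h * r s| ≤ L * (‖p‖ * ‖q‖ * ‖r‖) := fun s k h => by
    have hL : 0 ≤ L := (abs_nonneg _).trans (hD s k h)
    rw [abs_mul, abs_mul, abs_mul, ← mul_assoc, ← mul_assoc]
    gcongr
    exacts [hD s k h, norm_le_pi_norm p k, norm_le_pi_norm q h, norm_le_pi_norm r s]
  calc |trilinSum D p q r|
      ≤ Fintype.card ι * (Fintype.card ι * (Fintype.card ι * (L * (‖p‖ * ‖q‖ * ‖r‖)))) :=
        abs_sum_le_card_mul fun s => abs_sum_le_card_mul fun k =>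
          abs_sum_le_card_mul fun h => hterm s k h
    _ = _ := by ring

lemma sqrt_sum_sq_le (p : ι → ℝ) :
    √(∑ i, p i ^ 2) ≤ √(Fintype.card ι) * ‖p‖ := by
  rw [sum_sq_eq_dotProduct_self, ← Real.sqrt_sq (norm_nonneg p),
    ← Real.sqrt_mul (Nat.cast_nonneg _)]
  exact Real.sqrt_le_sqrt (((le_abs_self _).trans (abs_dotProduct_le p p)).trans_eq (by ring))

lemma sum_normSq_add_mul_I (ξ b : ι → ℝ) (t : ℝ) :
    ∑ i, Complex.normSq ((ξ i : ℂ) + (t : ℂ) * Complex.I * (b i : ℂ))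
      = ξ ⬝ᵥ ξ + t ^ 2 * (b ⬝ᵥ b) := by
  have hsplit : ∀ i, (ξ i : ℂ) + (t : ℂ) * Complex.I * (b i : ℂ)
      = (ξ i : ℂ) + ((t * b i : ℝ) : ℂ) * Complex.I := fun i => by push_cast; ring
  simp only [hsplit, Complex.normSq_add_mul_I, dotProduct, Finset.mul_sum, ← sum_add_distrib]
  exact sum_congr rfl fun i _ => by ring

end Forms

section Elliptic

variable {ι : Type*} [Fintype ι] [DecidableEq ι] {A : Matrix ι ι ℝ} {lam : ℝ}

lemma isUnit_det_of_coercive (hlam : 0 < lam)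
    (hlow : ∀ ξ, lam⁻¹ * (ξ ⬝ᵥ ξ) ≤ ξ ⬝ᵥ (A *ᵥ ξ)) : IsUnit A.det := by
  rw [isUnit_iff_ne_zero, Ne, ← exists_mulVec_eq_zero_iff]
  rintro ⟨ξ, hξ, hAξ⟩
  have h := hlow ξ
  rw [hAξ, dotProduct_zero] at h
  have h0 : ξ ⬝ᵥ ξ ≤ 0 := nonpos_of_mul_nonpos_right h (inv_pos.2 hlam)
  exact hξ (dotProduct_self_eq_zero.1
    (h0.antisymm ((sq_nonneg _).trans (sq_norm_le_dotProduct_self ξ))))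

lemma mulVec_inv_mulVec (hlam : 0 < lam)
    (hlow : ∀ ξ, lam⁻¹ * (ξ ⬝ᵥ ξ) ≤ ξ ⬝ᵥ (A *ᵥ ξ)) (η : ι → ℝ) : A *ᵥ (A⁻¹ *ᵥ η) = η := by
  rw [mulVec_mulVec, mul_nonsing_inv A (isUnit_det_of_coercive hlam hlow), one_mulVec]

lemma inv_mulVec_dotProduct_self_le (hlam : 0 < lam)
    (hlow : ∀ ξ, lam⁻¹ * (ξ ⬝ᵥ ξ) ≤ ξ ⬝ᵥ (A *ᵥ ξ)) (η : ι → ℝ) :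
    (A⁻¹ *ᵥ η) ⬝ᵥ (A⁻¹ *ᵥ η) ≤ lam * (η ⬝ᵥ (A⁻¹ *ᵥ η)) := by
  have h := hlow (A⁻¹ *ᵥ η)
  rw [mulVec_inv_mulVec hlam hlow, dotProduct_comm (A⁻¹ *ᵥ η) η] at h
  rwa [inv_mul_le_iff₀ hlam] at h

lemma dotProduct_self_le_inv_mulVec (hsymm : A.IsSymm) (hlam : 0 < lam)
    (hlow : ∀ ξ, lam⁻¹ * (ξ ⬝ᵥ ξ) ≤ ξ ⬝ᵥ (A *ᵥ ξ))
    (hup : ∀ ξ, ξ ⬝ᵥ (A *ᵥ ξ) ≤ lam * (ξ ⬝ᵥ ξ)) (η : ι → ℝ) :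
    η ⬝ᵥ η ≤ lam * (η ⬝ᵥ (A⁻¹ *ᵥ η)) := by
  set w := A⁻¹ *ᵥ η
  have hAw : A *ᵥ w = η := mulVec_inv_mulVec hlam hlow η
  have hwAη : w ⬝ᵥ (A *ᵥ η) = η ⬝ᵥ η := by
    rw [dotProduct_mulVec, ← mulVec_transpose, hsymm.eq, hAw]
  -- `0 ≤ (λw - η) ⬝ A (λw - η) = λ² (η ⬝ w) - 2λ |η|² + η ⬝ A η ≤ λ² (η ⬝ w) - λ |η|²`
  have hnonneg : 0 ≤ (lam • w - η) ⬝ᵥ (A *ᵥ (lam • w - η)) :=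
    (mul_nonneg (inv_nonneg.2 hlam.le) ((sq_nonneg _).trans (sq_norm_le_dotProduct_self _))).trans
      (hlow _)
  rw [mulVec_sub, mulVec_smul, hAw] at hnonneg
  simp only [sub_dotProduct, dotProduct_sub, smul_dotProduct, dotProduct_smul, hwAη,
    smul_eq_mul] at hnonneg
  rw [dotProduct_comm η w]
  nlinarith [hup η]

lemma norm_inv_mulVec_le (hlam : 0 < lam) (hlow : ∀ ξ, lam⁻¹ * (ξ ⬝ᵥ ξ) ≤ ξ ⬝ᵥ (A *ᵥ ξ))
    (η : ι → ℝ) :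
    ‖A⁻¹ *ᵥ η‖ ≤ lam * Fintype.card ι * ‖η‖ := by
  set w := A⁻¹ *ᵥ η
  have h : ‖w‖ ^ 2 ≤ (lam * Fintype.card ι * ‖η‖) * ‖w‖ :=
    calc ‖w‖ ^ 2 ≤ w ⬝ᵥ w := sq_norm_le_dotProduct_self w
      _ ≤ lam * (η ⬝ᵥ w) := inv_mulVec_dotProduct_self_le hlam hlow η
      _ ≤ lam * (Fintype.card ι * (‖η‖ * ‖w‖)) :=
        mul_le_mul_of_nonneg_left ((le_abs_self _).trans (abs_dotProduct_le η w)) hlam.le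
      _ = _ := by ring
  have hc : 0 ≤ lam * Fintype.card ι * ‖η‖ := by positivity
  nlinarith [norm_nonneg w]

end Elliptic

section Estimate

variable {ι : Type*} [Fintype ι]

lemma abs_Qform_remainder_le {H : Matrix ι ι ℝ} {D : ι → ι → ι → ℝ} {M L lam T r V : ℝ}
    (hM : 0 ≤ M) (hL : 0 ≤ L) (hH : ∀ j k, |H j k| ≤ M) (hD : ∀ s k h, |D s k h| ≤ L)
    {u v : ι → ℝ} (hu : ‖u‖ ^ 2 ≤ lam * T ^ 2 * r) (hv : ‖v‖ ^ 2 ≤ lam * r) (hV : ‖v‖ ≤ V) :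
    |4 * (u ⬝ᵥ (H *ᵥ u)) + T ^ 2 * (4 * (v ⬝ᵥ (H *ᵥ v)))
        - 4 * trilinSum D v u u + 2 * trilinSum D u u v - 2 * T ^ 2 * trilinSum D v v v|
      ≤ 8 * Fintype.card ι ^ 2 * lam * (M + Fintype.card ι * L * V) * T ^ 2 * r := by
  set N : ℝ := (Fintype.card ι : ℝ)
  have hV0 : 0 ≤ V := (norm_nonneg v).trans hV
  have hvuu : ‖v‖ * ‖u‖ * ‖u‖ ≤ V * (lam * T ^ 2 * r) := by
    rw [mul_assoc, ← sq]; exact mul_le_mul hV hu (sq_nonneg _) hV0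
  have e1 : |u ⬝ᵥ (H *ᵥ u)| ≤ N ^ 2 * M * (lam * T ^ 2 * r) :=
    (abs_dotProduct_mulVec_le hH u u).trans (by rw [← sq]; gcongr)
  have e2 : |T ^ 2 * (v ⬝ᵥ (H *ᵥ v))| ≤ T ^ 2 * (N ^ 2 * M * (lam * r)) := by
    rw [abs_mul, abs_sq]
    exact mul_le_mul_of_nonneg_left
      ((abs_dotProduct_mulVec_le hH v v).trans (by rw [← sq]; gcongr)) (sq_nonneg T)
  have e3 : |trilinSum D v u u| ≤ N ^ 3 * L * (V * (lam * T ^ 2 * r)) :=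
    (abs_trilinSum_le hD v u u).trans (mul_le_mul_of_nonneg_left hvuu (by positivity))
  have e4 : |trilinSum D u u v| ≤ N ^ 3 * L * (V * (lam * T ^ 2 * r)) :=
    (abs_trilinSum_le hD u u v).trans (mul_le_mul_of_nonneg_left
      (by rw [mul_comm (‖u‖ * ‖u‖), ← mul_assoc]; exact hvuu) (by positivity))
  have e5 : |T ^ 2 * trilinSum D v v v| ≤ T ^ 2 * (N ^ 3 * L * (V * (lam * r))) := by
    rw [abs_mul, abs_sq]
    refine mul_le_mul_of_nonneg_left ((abs_trilinSum_le hD v v v).trans ?_) (sq_nonneg T)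
    rw [mul_assoc ‖v‖, ← sq]
    gcongr
  rw [abs_le] at e1 e2 e3 e4 e5 ⊢
  constructor <;> linarith [e1.1, e1.2, e2.1, e2.2, e3.1, e3.2, e4.1, e4.2, e5.1, e5.2]

end Estimate

section Calculus

variable {n : ℕ}

def pdVec (f : (Fin n → ℝ) → ℝ) (x : Fin n → ℝ) : Fin n → ℝ := fun i => pd i f x

def pd2Matrix (f : (Fin n → ℝ) → ℝ) (x : Fin n → ℝ) : Matrix (Fin n) (Fin n) ℝ :=
  Matrix.of fun j k => pd2 j k f x

def pdMetric (g : (Fin n → ℝ) → Matrix (Fin n) (Fin n) ℝ) (x : Fin n → ℝ) :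
    Fin n → Fin n → Fin n → ℝ :=
  fun s k h => pd s (fun y => g y k h) x

lemma abs_pd_le_norm_fderiv (i : Fin n) (f : (Fin n → ℝ) → ℝ) (x : Fin n → ℝ) :
    |pd i f x| ≤ ‖fderiv ℝ f x‖ := by
  simpa [pd, Pi.norm_single] using (fderiv ℝ f x).le_opNorm (Pi.single i 1)

lemma norm_pdVec_le_norm_fderiv (f : (Fin n → ℝ) → ℝ) (x : Fin n → ℝ) :
    ‖pdVec f x‖ ≤ ‖fderiv ℝ f x‖ :=
  (pi_norm_le_iff_of_nonneg (norm_nonneg _)).2 fun i => abs_pd_le_norm_fderiv i f x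

lemma abs_pd_le_of_lipschitzWith {f : (Fin n → ℝ) → ℝ} {K : NNReal} (hf : LipschitzWith K f)
    (i : Fin n) (x : Fin n → ℝ) : |pd i f x| ≤ K :=
  (abs_pd_le_norm_fderiv i f x).trans (norm_fderiv_le_of_lipschitz ℝ hf)

lemma abs_pdMetric_le {g : (Fin n → ℝ) → Matrix (Fin n) (Fin n) ℝ} {Lam : ℝ}
    (hLam : 0 ≤ Lam)
    (hlip : ∀ x y : Fin n → ℝ,
      (∑ i, ∑ j, |g x i j - g y i j|) ≤ Lam * √(∑ i, (x i - y i) ^ 2))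
    (x : Fin n → ℝ) (s k h : Fin n) : |pdMetric g x s k h| ≤ Lam * √n := by
  have hK : 0 ≤ Lam * √n := by positivity
  have hentry : LipschitzWith (Real.toNNReal (Lam * √n)) fun y => g y k h := by
    refine LipschitzWith.of_dist_le_mul fun p q => ?_
    rw [Real.coe_toNNReal _ hK, Real.dist_eq, dist_eq_norm, mul_assoc]
    calc |g p k h - g q k h| ≤ ∑ i, ∑ j, |g p i j - g q i j| :=
          (single_le_sum (f := fun j => |g p k j - g q k j|) (fun _ _ => abs_nonneg _)
            (mem_univ h)).trans
          (single_le_sum (f := fun i => ∑ j, |g p i j - g q i j|)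
            (fun _ _ => sum_nonneg fun _ _ => abs_nonneg _) (mem_univ k))
      _ ≤ Lam * √(∑ i, (p i - q i) ^ 2) := hlip p q
      _ ≤ Lam * (√n * ‖p - q‖) := by
          gcongr; simpa using sqrt_sum_sq_le (p - q)
  have hpd := abs_pd_le_of_lipschitzWith hentry s x
  rwa [Real.coe_toNNReal _ hK] at hpd

lemma hasFDerivAt_pd {ψ : (Fin n → ℝ) → ℝ} (hψ : ContDiff ℝ 2 ψ) (k : Fin n)
    (x : Fin n → ℝ) :
    HasFDerivAt (fun y => pd k ψ y)
      ((ContinuousLinearMap.apply ℝ ℝ (Pi.single k 1)).comp (fderiv ℝ (fderiv ℝ ψ) x)) x := by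
  have h : HasFDerivAt (fderiv ℝ ψ) (fderiv ℝ (fderiv ℝ ψ) x) x :=
    (((hψ.fderiv_right (m := 1) (by norm_num)).differentiable (by norm_num)) x).hasFDerivAt
  exact (ContinuousLinearMap.apply ℝ ℝ (Pi.single k 1)).hasFDerivAt.comp x h

lemma pd2_eq_fderiv_fderiv {ψ : (Fin n → ℝ) → ℝ} (hψ : ContDiff ℝ 2 ψ) (j k : Fin n)
    (x : Fin n → ℝ) :
    pd2 j k ψ x = fderiv ℝ (fderiv ℝ ψ) x (Pi.single j 1) (Pi.single k 1) := by
  rw [pd2, pd, (hasFDerivAt_pd hψ k x).fderiv]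
  rfl

lemma abs_pd2_le_norm_fderiv_fderiv {ψ : (Fin n → ℝ) → ℝ} (hψ : ContDiff ℝ 2 ψ)
    (j k : Fin n) (x : Fin n → ℝ) : |pd2 j k ψ x| ≤ ‖fderiv ℝ (fderiv ℝ ψ) x‖ := by
  rw [pd2_eq_fderiv_fderiv hψ]
  simpa [Pi.norm_single] using
    (fderiv ℝ (fderiv ℝ ψ) x).le_opNorm₂ (Pi.single j 1) (Pi.single k 1)

lemma pd_exp_mul {ψ : (Fin n → ℝ) → ℝ} (hψ : Differentiable ℝ ψ) (μ : ℝ) (i : Fin n)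
    (x : Fin n → ℝ) :
    pd i (fun y => exp (μ * ψ y)) x = exp (μ * ψ x) * (μ * pd i ψ x) := by
  rw [pd, (((hψ x).hasFDerivAt.const_mul μ).exp).fderiv]
  simp [pd]

lemma pd2_exp_mul {ψ : (Fin n → ℝ) → ℝ} (hψ : ContDiff ℝ 2 ψ) (μ : ℝ) (j k : Fin n)
    (x : Fin n → ℝ) :
    pd2 j k (fun y => exp (μ * ψ y)) x
      = exp (μ * ψ x) * (μ * pd2 j k ψ x + μ ^ 2 * pd j ψ x * pd k ψ x) := by
  have hψ' : Differentiable ℝ ψ := hψ.differentiable (by norm_num)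
  have hprod : HasFDerivAt (fun y => exp (μ * ψ y) * (μ * pd k ψ y)) _ x :=
    (((hψ' x).hasFDerivAt.const_mul μ).exp).mul ((hasFDerivAt_pd hψ k x).const_mul μ)
  rw [pd2, funext fun y => pd_exp_mul hψ' μ k y, pd]
  beta_reduce
  rw [hprod.fderiv, pd2_eq_fderiv_fderiv hψ]
  simp only [pd, _root_.add_apply, _root_.smul_apply,
    ContinuousLinearMap.comp_apply, ContinuousLinearMap.apply_apply, smul_eq_mul]
  ring

lemma pdVec_exp_mul {ψ : (Fin n → ℝ) → ℝ} (hψ : Differentiable ℝ ψ) (μ : ℝ)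
    (x : Fin n → ℝ) :
    pdVec (fun y => exp (μ * ψ y)) x = (exp (μ * ψ x) * μ) • pdVec ψ x := by
  ext i
  simp [pdVec, pd_exp_mul hψ, mul_assoc]

lemma pd2Matrix_exp_mul {ψ : (Fin n → ℝ) → ℝ} (hψ : ContDiff ℝ 2 ψ) (μ : ℝ)
    (x : Fin n → ℝ) :
    pd2Matrix (fun y => exp (μ * ψ y)) x
      = (exp (μ * ψ x) * μ) • pd2Matrix ψ x
        + (exp (μ * ψ x) * μ ^ 2) • vecMulVec (pdVec ψ x) (pdVec ψ x) := by
  ext j k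
  simp only [pd2Matrix, pd2_exp_mul hψ, of_apply, smul_of, vecMulVec, pdVec, Matrix.add_apply,
    Pi.smul_apply, smul_eq_mul]
  ring

lemma abs_and_pd_and_pd2_le_of_add_norm_le {ψ : (Fin n → ℝ) → ℝ} (hψ : ContDiff ℝ 2 ψ)
    {x : Fin n → ℝ} {M : ℝ} (h : |ψ x| + ‖fderiv ℝ ψ x‖ + ‖fderiv ℝ (fderiv ℝ ψ) x‖ ≤ M) :
    |ψ x| ≤ M ∧ ‖pdVec ψ x‖ ≤ M ∧ ∀ j k, |pd2 j k ψ x| ≤ M := by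
  have h1 := norm_nonneg (fderiv ℝ ψ x)
  have h2 := norm_nonneg (fderiv ℝ (fderiv ℝ ψ) x)
  refine ⟨by linarith, (norm_pdVec_le_norm_fderiv ψ x).trans (by linarith [abs_nonneg (ψ x)]),
    fun j k => (abs_pd2_le_norm_fderiv_fderiv hψ j k x).trans (by linarith [abs_nonneg (ψ x)])⟩

end Calculus

section Qform

variable {n : ℕ}

lemma Qform_eq (g : (Fin n → ℝ) → Matrix (Fin n) (Fin n) ℝ) (φ : (Fin n → ℝ) → ℝ)
    (x ξ : Fin n → ℝ) (τ : ℝ) :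
    Qform g φ x ξ τ
      = 4 * (raise g x ξ ⬝ᵥ (pd2Matrix φ x *ᵥ raise g x ξ)
          + τ ^ 2 * (gradg g φ x ⬝ᵥ (pd2Matrix φ x *ᵥ gradg g φ x)))
        - 4 * trilinSum (pdMetric g x) (gradg g φ x) (raise g x ξ) (raise g x ξ)
        + 2 * trilinSum (pdMetric g x) (raise g x ξ) (raise g x ξ) (gradg g φ x)
        - 2 * τ ^ 2 * trilinSum (pdMetric g x) (gradg g φ x) (gradg g φ x) (gradg g φ x) := by
  rw [Qform, ← sum_sum_mul_mul_eq_dotProduct_mulVec, ← sum_sum_mul_mul_eq_dotProduct_mulVec]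
  rfl

lemma dotProduct_pd2Matrix_exp_mul {ψ : (Fin n → ℝ) → ℝ} (hψ : ContDiff ℝ 2 ψ) (μ : ℝ)
    (x p : Fin n → ℝ) :
    p ⬝ᵥ (pd2Matrix (fun y => exp (μ * ψ y)) x *ᵥ p)
      = exp (μ * ψ x) * μ * (p ⬝ᵥ (pd2Matrix ψ x *ᵥ p) + μ * (pdVec ψ x ⬝ᵥ p) ^ 2) := by
  rw [pd2Matrix_exp_mul hψ, add_mulVec, smul_mulVec, smul_mulVec, vecMulVec_mulVec,
    op_smul_eq_smul, dotProduct_add, dotProduct_smul, dotProduct_smul, dotProduct_smul,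
    dotProduct_comm p (pdVec ψ x)]
  simp only [smul_eq_mul]
  ring

lemma gradg_exp_mul {g : (Fin n → ℝ) → Matrix (Fin n) (Fin n) ℝ} {ψ : (Fin n → ℝ) → ℝ}
    (hψ : Differentiable ℝ ψ) (μ : ℝ) (x : Fin n → ℝ) :
    gradg g (fun y => exp (μ * ψ y)) x = (exp (μ * ψ x) * μ) • gradg g ψ x := by
  change (g x)⁻¹ *ᵥ pdVec _ x = _ • ((g x)⁻¹ *ᵥ pdVec ψ x)
  rw [pdVec_exp_mul hψ, mulVec_smul]

lemma Qform_exp_mul {g : (Fin n → ℝ) → Matrix (Fin n) (Fin n) ℝ} {ψ : (Fin n → ℝ) → ℝ}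
    (hψ : ContDiff ℝ 2 ψ) (μ : ℝ) (x ξ : Fin n → ℝ) (τ : ℝ) :
    let E := exp (μ * ψ x)
    let u := raise g x ξ
    let v := gradg g ψ x
    let H := pd2Matrix ψ x
    let D := pdMetric g x
    let a := pdVec ψ x
    let T := τ * (E * μ)
    Qform g (fun y => exp (μ * ψ y)) x ξ τ
      = E * μ * (4 * (u ⬝ᵥ (H *ᵥ u)) + 4 * μ * (a ⬝ᵥ u) ^ 2
          + T ^ 2 * (4 * (v ⬝ᵥ (H *ᵥ v)) + 4 * μ * (a ⬝ᵥ v) ^ 2)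
          - 4 * trilinSum D v u u + 2 * trilinSum D u u v - 2 * T ^ 2 * trilinSum D v v v) := by
  intro E u v H D a T
  rw [Qform_eq, gradg_exp_mul (hψ.differentiable (by norm_num)), mulVec_smul, dotProduct_smul,
    smul_dotProduct, dotProduct_pd2Matrix_exp_mul hψ, dotProduct_pd2Matrix_exp_mul hψ,
    trilinSum_smul_left, trilinSum_smul_right, trilinSum_smul_left, trilinSum_smul_mid,
    trilinSum_smul_right]
  simp only [smul_eq_mul]
  ring

end Qform

section Characteristic

variable {n : ℕ}

lemma re_Pc (g : (Fin n → ℝ) → Matrix (Fin n) (Fin n) ℝ) (x ξ b : Fin n → ℝ) (t : ℝ) :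
    (Pc g x fun i => (ξ i : ℂ) + (t : ℂ) * Complex.I * (b i : ℂ)).re
      = ξ ⬝ᵥ ((g x)⁻¹ *ᵥ ξ) - t ^ 2 * (b ⬝ᵥ ((g x)⁻¹ *ᵥ b)) := by
  rw [← sum_sum_mul_mul_eq_dotProduct_mulVec, ← sum_sum_mul_mul_eq_dotProduct_mulVec]
  simp only [Pc, Complex.re_sum, Finset.mul_sum, ← sum_sub_distrib]
  refine sum_congr rfl fun i _ => sum_congr rfl fun j _ => ?_
  simp only [Complex.mul_re, Complex.mul_im, Complex.add_re, Complex.add_im, Complex.ofReal_re,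
    Complex.ofReal_im, Complex.I_re, Complex.I_im]
  ring

lemma dotProduct_inv_mulVec_eq_of_Pc_eq_zero {g : (Fin n → ℝ) → Matrix (Fin n) (Fin n) ℝ}
    {x ξ b : Fin n → ℝ} {t : ℝ}
    (h : Pc g x (fun i => (ξ i : ℂ) + (t : ℂ) * Complex.I * (b i : ℂ)) = 0) :
    ξ ⬝ᵥ ((g x)⁻¹ *ᵥ ξ) = t ^ 2 * (b ⬝ᵥ ((g x)⁻¹ *ᵥ b)) := by
  have hre := re_Pc g x ξ b t
  rw [h, Complex.zero_re] at hre
  linarith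

end Characteristic

section Pointwise

variable {n : ℕ} {g : (Fin n → ℝ) → Matrix (Fin n) (Fin n) ℝ} {ψ : (Fin n → ℝ) → ℝ}
  {x : Fin n → ℝ} {lam M μ : ℝ} {ξ : Fin n → ℝ} {τ : ℝ}

lemma raise_dotProduct_eq_of_Pc_eq_zero (hψ : Differentiable ℝ ψ)
    (hchar : Pc g x (fun i =>
      (ξ i : ℂ) + (τ : ℂ) * Complex.I * (pd i (fun y => exp (μ * ψ y)) x : ℂ)) = 0) :
    ξ ⬝ᵥ raise g x ξ = (τ * (exp (μ * ψ x) * μ)) ^ 2 * (pdVec ψ x ⬝ᵥ gradg g ψ x) := by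
  change ξ ⬝ᵥ ((g x)⁻¹ *ᵥ ξ) = _ * (pdVec ψ x ⬝ᵥ ((g x)⁻¹ *ᵥ pdVec ψ x))
  rw [dotProduct_inv_mulVec_eq_of_Pc_eq_zero (b := pdVec (fun y => exp (μ * ψ y)) x) hchar,
    pdVec_exp_mul hψ, mulVec_smul, smul_dotProduct, dotProduct_smul, smul_eq_mul, smul_eq_mul]
  ring

lemma innerg_gradg_gradg (hlam : 0 < lam)
    (hlow : ∀ ξ, lam⁻¹ * (ξ ⬝ᵥ ξ) ≤ ξ ⬝ᵥ (g x *ᵥ ξ)) :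
    innerg g x (gradg g ψ x) (gradg g ψ x) = pdVec ψ x ⬝ᵥ gradg g ψ x := by
  rw [innerg, sum_sum_mul_mul_eq_dotProduct_mulVec]
  change gradg g ψ x ⬝ᵥ (g x *ᵥ ((g x)⁻¹ *ᵥ pdVec ψ x)) = _
  rw [mulVec_inv_mulVec hlam hlow, dotProduct_comm]

lemma sum_normSq_le (hψ : Differentiable ℝ ψ) (hsymm : (g x).IsSymm) (hlam : 0 < lam)
    (hlow : ∀ ξ, lam⁻¹ * (ξ ⬝ᵥ ξ) ≤ ξ ⬝ᵥ (g x *ᵥ ξ))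
    (hup : ∀ ξ, ξ ⬝ᵥ (g x *ᵥ ξ) ≤ lam * (ξ ⬝ᵥ ξ)) (ha : ‖pdVec ψ x‖ ≤ M)
    (hchar : Pc g x (fun i =>
      (ξ i : ℂ) + (τ : ℂ) * Complex.I * (pd i (fun y => exp (μ * ψ y)) x : ℂ)) = 0) :
    ∑ i, Complex.normSq
        ((ξ i : ℂ) + (τ : ℂ) * Complex.I * (pd i (fun y => exp (μ * ψ y)) x : ℂ))
      ≤ (lam ^ 2 * n ^ 2 + n) * M ^ 2 * (τ * (exp (μ * ψ x) * μ)) ^ 2 := by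
  set T := τ * (exp (μ * ψ x) * μ)
  set a := pdVec ψ x
  have hM : 0 ≤ M := (norm_nonneg _).trans ha
  have hv : ‖gradg g ψ x‖ ≤ lam * n * M := by
    have h := norm_inv_mulVec_le hlam hlow a
    rw [Fintype.card_fin] at h
    exact h.trans (by gcongr)
  have hr : a ⬝ᵥ gradg g ψ x ≤ lam * n ^ 2 * M ^ 2 :=
    calc a ⬝ᵥ gradg g ψ x ≤ n * (‖a‖ * ‖gradg g ψ x‖) := by
          simpa using (le_abs_self _).trans (abs_dotProduct_le a (gradg g ψ x))
      _ ≤ n * (M * (lam * n * M)) := by gcongr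
      _ = lam * n ^ 2 * M ^ 2 := by ring
  have hξ : ξ ⬝ᵥ ξ ≤ lam * (T ^ 2 * (lam * n ^ 2 * M ^ 2)) := by
    calc ξ ⬝ᵥ ξ ≤ lam * (ξ ⬝ᵥ raise g x ξ) := dotProduct_self_le_inv_mulVec hsymm hlam hlow hup ξ
      _ = lam * (T ^ 2 * (a ⬝ᵥ gradg g ψ x)) := by rw [raise_dotProduct_eq_of_Pc_eq_zero hψ hchar]
      _ ≤ _ := by gcongr
  have haa : a ⬝ᵥ a ≤ n * M ^ 2 := by
    have h := abs_dotProduct_le a a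
    rw [Fintype.card_fin] at h
    exact (le_abs_self _).trans (h.trans (by rw [sq]; gcongr))
  calc ∑ i, Complex.normSq
        ((ξ i : ℂ) + (τ : ℂ) * Complex.I * (pd i (fun y => exp (μ * ψ y)) x : ℂ))
      = ξ ⬝ᵥ ξ + τ ^ 2 * (pdVec (fun y => exp (μ * ψ y)) x ⬝ᵥ pdVec (fun y => exp (μ * ψ y)) x) :=
        sum_normSq_add_mul_I ξ _ τ
    _ = ξ ⬝ᵥ ξ + T ^ 2 * (a ⬝ᵥ a) := by
        rw [pdVec_exp_mul hψ, dotProduct_smul, smul_dotProduct, smul_eq_mul, smul_eq_mul]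
        ring
    _ ≤ lam * (T ^ 2 * (lam * n ^ 2 * M ^ 2)) + T ^ 2 * (n * M ^ 2) := by gcongr
    _ = _ := by ring

lemma Qform_exp_mul_ge (hψ : ContDiff ℝ 2 ψ) {L m₀ : ℝ} (hlam : 0 < lam)
    (hlow : ∀ ξ, lam⁻¹ * (ξ ⬝ᵥ ξ) ≤ ξ ⬝ᵥ (g x *ᵥ ξ)) (hM : 0 ≤ M) (hL : 0 ≤ L)
    (ha : ‖pdVec ψ x‖ ≤ M) (hH : ∀ j k, |pd2 j k ψ x| ≤ M)
    (hD : ∀ s k h, |pdMetric g x s k h| ≤ L) (hr : m₀ ^ 2 ≤ pdVec ψ x ⬝ᵥ gradg g ψ x)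
    (hμ0 : 0 ≤ μ) (hμ : 8 * n ^ 2 * lam * (M + n * L * (lam * n * M)) ≤ 2 * μ * m₀ ^ 2)
    (hchar : Pc g x (fun i =>
      (ξ i : ℂ) + (τ : ℂ) * Complex.I * (pd i (fun y => exp (μ * ψ y)) x : ℂ)) = 0) :
    2 * μ ^ 2 * m₀ ^ 4 * exp (μ * ψ x) * (τ * (exp (μ * ψ x) * μ)) ^ 2
      ≤ Qform g (fun y => exp (μ * ψ y)) x ξ τ := by
  have hψ' : Differentiable ℝ ψ := hψ.differentiable (by norm_num)
  set E := exp (μ * ψ x)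
  set T := τ * (E * μ)
  set a := pdVec ψ x
  set u := raise g x ξ
  set v := gradg g ψ x
  set r := a ⬝ᵥ v
  have hr0 : 0 ≤ r := (sq_nonneg m₀).trans hr
  have hu : ‖u‖ ^ 2 ≤ lam * T ^ 2 * r :=
    calc ‖u‖ ^ 2 ≤ u ⬝ᵥ u := sq_norm_le_dotProduct_self u
      _ ≤ lam * (ξ ⬝ᵥ u) := inv_mulVec_dotProduct_self_le hlam hlow ξ
      _ = lam * T ^ 2 * r := by rw [raise_dotProduct_eq_of_Pc_eq_zero hψ' hchar, mul_assoc]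
  have hv : ‖v‖ ^ 2 ≤ lam * r :=
    (sq_norm_le_dotProduct_self v).trans (inv_mulVec_dotProduct_self_le hlam hlow a)
  have hV : ‖v‖ ≤ lam * n * M := by
    have h := norm_inv_mulVec_le hlam hlow a
    rw [Fintype.card_fin] at h
    exact h.trans (by gcongr)
  have hR := abs_Qform_remainder_le (H := pd2Matrix ψ x) hM hL hH hD hu hv hV
  rw [Fintype.card_fin] at hR
  have hbracket : 2 * μ * m₀ ^ 4 * T ^ 2
      ≤ 4 * (u ⬝ᵥ (pd2Matrix ψ x *ᵥ u)) + 4 * μ * (a ⬝ᵥ u) ^ 2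
          + T ^ 2 * (4 * (v ⬝ᵥ (pd2Matrix ψ x *ᵥ v)) + 4 * μ * r ^ 2)
          - 4 * trilinSum (pdMetric g x) v u u + 2 * trilinSum (pdMetric g x) u u v
          - 2 * T ^ 2 * trilinSum (pdMetric g x) v v v := by
    have hK : 8 * n ^ 2 * lam * (M + n * L * (lam * n * M)) * T ^ 2 * r
        ≤ 2 * μ * m₀ ^ 2 * T ^ 2 * r := by gcongr
    have hμT : 0 ≤ 2 * μ * T ^ 2 := by positivity
    have hm₀r := mul_le_mul_of_nonneg_left hr (mul_nonneg hμT hr0)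
    have hm₀r' := mul_le_mul_of_nonneg_left (pow_le_pow_left₀ (sq_nonneg m₀) hr 2) hμT
    linarith [(abs_le.1 hR).1, mul_nonneg hμ0 (sq_nonneg (a ⬝ᵥ u))]
  calc 2 * μ ^ 2 * m₀ ^ 4 * E * T ^ 2 = E * μ * (2 * μ * m₀ ^ 4 * T ^ 2) := by ring
    _ ≤ _ := by gcongr
    _ = Qform g (fun y => exp (μ * ψ y)) x ξ τ := (Qform_exp_mul hψ μ x ξ τ).symm

end Pointwise

theorem stmt_16_general {n : ℕ} (hn : 2 ≤ n)
    (Ω : Set (Fin n → ℝ))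
    (g : (Fin n → ℝ) → Matrix (Fin n) (Fin n) ℝ)
    (lam Lam m₀ M₀ : ℝ) (hlam : 1 ≤ lam) (hLam : 0 < Lam)
    (hsymm : ∀ x, (g x).IsSymm)
    (hell : ∀ (x : Fin n → ℝ) (ξ : Fin n → ℝ),
      lam⁻¹ * (∑ i, (ξ i)^2) ≤ ∑ i, ∑ j, g x i j * ξ i * ξ j
        ∧ (∑ i, ∑ j, g x i j * ξ i * ξ j) ≤ lam * ∑ i, (ξ i)^2)
    (hlip : ∀ x y : Fin n → ℝ,
      (∑ i, ∑ j, |g x i j - g y i j|) ≤ Lam * Real.sqrt (∑ i, (x i - y i)^2))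
    (ψ : (Fin n → ℝ) → ℝ) (hψ : ContDiff ℝ 2 ψ)
    (hm₀ : 0 < m₀) (hM₀ : 0 < M₀)
    (hgradψ : ∀ x ∈ closure Ω,
      m₀ ≤ Real.sqrt (innerg g x (gradg g ψ x) (gradg g ψ x)))
    (hψM : ∀ x ∈ closure Ω, |ψ x| + ‖fderiv ℝ ψ x‖ + ‖fderiv ℝ (fderiv ℝ ψ) x‖ ≤ M₀) :
    ∃ C > 0, ∀ μ : ℝ, C / m₀ ≤ μ →
      ∃ c₀ > 0, ∀ x ∈ closure Ω, ∀ (ξ : Fin n → ℝ) (τ : ℝ),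
        Pc g x (fun i =>
            (ξ i : ℂ) + (τ : ℂ) * Complex.I
              * (pd i (fun y => Real.exp (μ * ψ y)) x : ℂ)) = 0 →
        (fun i => (ξ i : ℂ) + (τ : ℂ) * Complex.I
              * (pd i (fun y => Real.exp (μ * ψ y)) x : ℂ)) ≠ 0 →
        c₀ * ∑ i, Complex.normSq
            ((ξ i : ℂ) + (τ : ℂ) * Complex.I
              * (pd i (fun y => Real.exp (μ * ψ y)) x : ℂ))
          ≤ Qform g (fun y => Real.exp (μ * ψ y)) x ξ τ := by
  have hlam0 : 0 < lam := one_pos.trans_le hlam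
  have hn0 : (0 : ℝ) < n := by exact_mod_cast (by omega : 0 < n)
  have hlow : ∀ x ξ, lam⁻¹ * (ξ ⬝ᵥ ξ) ≤ ξ ⬝ᵥ (g x *ᵥ ξ) := fun x ξ => by
    simpa only [sum_sq_eq_dotProduct_self, sum_sum_mul_mul_eq_dotProduct_mulVec] using (hell x ξ).1
  have hup : ∀ x ξ, ξ ⬝ᵥ (g x *ᵥ ξ) ≤ lam * (ξ ⬝ᵥ ξ) := fun x ξ => by
    simpa only [sum_sq_eq_dotProduct_self, sum_sum_mul_mul_eq_dotProduct_mulVec] using (hell x ξ).2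
  set K := 8 * n ^ 2 * lam * (M₀ + n * (Lam * √n) * (lam * n * M₀))
  set K₂ := (lam ^ 2 * n ^ 2 + n) * M₀ ^ 2
  have hK₂ : 0 < K₂ := by positivity
  refine ⟨K / (2 * m₀), by positivity, fun μ hμ => ?_⟩
  have hμ0 : 0 < μ := (by positivity : 0 < K / (2 * m₀) / m₀).trans_le hμ
  have hμK : K ≤ 2 * μ * m₀ ^ 2 := by
    rw [div_div, div_le_iff₀ (by positivity)] at hμ
    linarith
  refine ⟨2 * μ ^ 2 * m₀ ^ 4 * exp (-(μ * M₀)) / K₂, by positivity, fun x hx ξ τ hchar _ => ?_⟩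
  obtain ⟨hψx, hdψ, hd2ψ⟩ := abs_and_pd_and_pd2_le_of_add_norm_le hψ (hψM x hx)
  have hr : m₀ ^ 2 ≤ pdVec ψ x ⬝ᵥ gradg g ψ x := by
    rw [← innerg_gradg_gradg hlam0 (hlow x), ← Real.le_sqrt' hm₀]
    exact hgradψ x hx
  have hQ := Qform_exp_mul_ge hψ hlam0 (hlow x) hM₀.le (by positivity) hdψ hd2ψ
    (abs_pdMetric_le hLam.le hlip x) hr hμ0.le hμK hchar
  have hζ := sum_normSq_le (hψ.differentiable (by norm_num)) (hsymm x) hlam0 (hlow x) (hup x)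
    hdψ hchar
  have hE : exp (-(μ * M₀)) ≤ exp (μ * ψ x) := by
    have h := mul_le_mul_of_nonneg_left (abs_le.1 hψx).1 hμ0.le
    exact exp_le_exp.2 (by linarith)
  calc _ ≤ 2 * μ ^ 2 * m₀ ^ 4 * exp (-(μ * M₀)) / K₂ * (K₂ * (τ * (exp (μ * ψ x) * μ)) ^ 2) := by
        gcongr
    _ = 2 * μ ^ 2 * m₀ ^ 4 * exp (-(μ * M₀)) * (τ * (exp (μ * ψ x) * μ)) ^ 2 := by
        field_simp
    _ ≤ 2 * μ ^ 2 * m₀ ^ 4 * exp (μ * ψ x) * (τ * (exp (μ * ψ x) * μ)) ^ 2 := by gcongr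
    _ ≤ _ := hQ

/-- construction of pseudoconvex weights — `φ = e^{μψ}` satisfies the strong
pseudoconvexity assumption for `μ ≥ C/m₀`. -/
theorem stmt_16 {n : ℕ} (hn : 2 ≤ n)
    (Ω : Set (Fin n → ℝ)) (hΩo : IsOpen Ω) (hΩb : IsBounded Ω)
    (g : (Fin n → ℝ) → Matrix (Fin n) (Fin n) ℝ)
    (lam Lam m₀ M₀ : ℝ) (hlam : 1 ≤ lam) (hLam : 0 < Lam)
    (hsymm : ∀ x, (g x).IsSymm)
    (hell : ∀ (x : Fin n → ℝ) (ξ : Fin n → ℝ),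
      lam⁻¹ * (∑ i, (ξ i)^2) ≤ ∑ i, ∑ j, g x i j * ξ i * ξ j
        ∧ (∑ i, ∑ j, g x i j * ξ i * ξ j) ≤ lam * ∑ i, (ξ i)^2)
    (hlip : ∀ x y : Fin n → ℝ,
      (∑ i, ∑ j, |g x i j - g y i j|) ≤ Lam * Real.sqrt (∑ i, (x i - y i)^2))
    (ψ : (Fin n → ℝ) → ℝ) (hψ : ContDiff ℝ 2 ψ)
    (hm₀ : 0 < m₀) (hM₀ : 0 < M₀)
    (hgradψ : ∀ x ∈ closure Ω,
      m₀ ≤ Real.sqrt (innerg g x (gradg g ψ x) (gradg g ψ x)))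
    (hψM : ∀ x ∈ closure Ω, |ψ x| + ‖fderiv ℝ ψ x‖ + ‖fderiv ℝ (fderiv ℝ ψ) x‖ ≤ M₀) :
    ∃ C > 0, ∀ μ : ℝ, C / m₀ ≤ μ →
      ∃ c₀ > 0, ∀ x ∈ closure Ω, ∀ (ξ : Fin n → ℝ) (τ : ℝ),
        Pc g x (fun i =>
            (ξ i : ℂ) + (τ : ℂ) * Complex.I
              * (pd i (fun y => Real.exp (μ * ψ y)) x : ℂ)) = 0 →
        (fun i => (ξ i : ℂ) + (τ : ℂ) * Complex.I
              * (pd i (fun y => Real.exp (μ * ψ y)) x : ℂ)) ≠ 0 →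
        c₀ * ∑ i, Complex.normSq
            ((ξ i : ℂ) + (τ : ℂ) * Complex.I
              * (pd i (fun y => Real.exp (μ * ψ y)) x : ℂ))
          ≤ Qform g (fun y => Real.exp (μ * ψ y)) x ξ τ :=
  stmt_16_general hn Ω g lam Lam m₀ M₀ hlam hLam hsymm hell hlip ψ hψ hm₀ hM₀ hgradψ hψM
end
end
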